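/- Let τ > 0, N a natural number, and for k = 1,…,N let E_k⁰, E_k¹ : ℝ → ℝ be continuous functions; let Ψ_N be the NuFI composite map of the corresponding backward Störmer–Verlet steps. Let f₀ : ℝ × ℝ → ℝ be measurable such that the function (x,v) ↦ f₀(x,v)·ln(f₀(x,v)) is integrable with respect to the volume measure on ℝ × ℝ. Then ∫∫ f₀(Ψ_N(x,v))·ln(f₀(Ψ_N(x,v))) dx dv = ∫∫ f₀(x,v)·ln(f₀(x,v)) dx dv (conservation of kinetic entropy by the NuFI discrete solution). -/
import Mathlib


open MeasureTheory

/-- The backward Störmer–Verlet step for the Vlasov–Poisson characteristics. -/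
noncomputable def svStep (τ : ℝ) (E0 E1 : ℝ → ℝ) : ℝ × ℝ → ℝ × ℝ :=
  fun p =>
    let vhalf := p.2 + (τ / 2) * E1 p.1
    let x1 := p.1 - τ * vhalf
    (x1, vhalf + (τ / 2) * E0 x1)

/-- The NuFI composite map `Ψ_N = Ψ⁽¹⁾ ∘ Ψ⁽²⁾ ∘ ⋯ ∘ Ψ⁽ᴺ⁾`. -/
noncomputable def nufiComp (τ : ℝ) (E0 E1 : ℕ → ℝ → ℝ) : ℕ → (ℝ × ℝ → ℝ × ℝ)
  | 0 => id
  | n + 1 => nufiComp τ E0 E1 n ∘ svStep τ (E0 (n + 1)) (E1 (n + 1))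

/-- Shear in velocity as a homeomorphism. -/
def vShear (g : ℝ → ℝ) (hg : Continuous g) : ℝ × ℝ ≃ₜ ℝ × ℝ where
  toFun p := (p.1, p.2 + g p.1)
  invFun p := (p.1, p.2 - g p.1)
  left_inv p := by simp
  right_inv p := by simp
  continuous_toFun := by fun_prop
  continuous_invFun := by fun_prop

/-- Shear in position as a homeomorphism. -/
def xShear (c : ℝ) : ℝ × ℝ ≃ₜ ℝ × ℝ where
  toFun p := (p.1 + c * p.2, p.2)
  invFun p := (p.1 - c * p.2, p.2)
  left_inv p := by simp
  right_inv p := by simp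
  continuous_toFun := by fun_prop
  continuous_invFun := by fun_prop

lemma vShear_mp (g : ℝ → ℝ) (hg : Continuous g) :
    MeasurePreserving (fun p : ℝ × ℝ => (p.1, p.2 + g p.1)) volume volume := by
  rw [Measure.volume_eq_prod]
  exact (MeasurePreserving.id volume).skew_product
    (by fun_prop) (Filter.Eventually.of_forall fun x => map_add_right_eq_self volume (g x))

lemma xShear_mp (c : ℝ) :
    MeasurePreserving (fun p : ℝ × ℝ => (p.1 + c * p.2, p.2)) volume volume := by
  have hs : MeasurePreserving (Prod.swap : ℝ × ℝ → ℝ × ℝ) volume volume := by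
    rw [Measure.volume_eq_prod]
    exact Measure.measurePreserving_swap
  have h := (hs.comp ((vShear_mp (fun v => c * v) (by fun_prop)).comp hs))
  have he : (fun p : ℝ × ℝ => (p.1 + c * p.2, p.2)) =
      Prod.swap ∘ (fun p : ℝ × ℝ => (p.1, p.2 + c * p.1)) ∘ Prod.swap := by
    ext p <;> simp [Function.comp]
  rw [he]; exact h

lemma svStep_eq (τ : ℝ) (E0 E1 : ℝ → ℝ) :
    svStep τ E0 E1 = (fun p : ℝ × ℝ => (p.1, p.2 + (τ/2) * E0 p.1)) ∘
      (fun p : ℝ × ℝ => (p.1 + (-τ) * p.2, p.2)) ∘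
      (fun p : ℝ × ℝ => (p.1, p.2 + (τ/2) * E1 p.1)) := by
  ext p <;> simp [svStep, Function.comp] <;> ring_nf <;> tauto

lemma vShear_emb (g : ℝ → ℝ) (hg : Continuous g) :
    MeasurableEmbedding (fun p : ℝ × ℝ => (p.1, p.2 + g p.1)) :=
  (vShear g hg).toMeasurableEquiv.measurableEmbedding

lemma xShear_emb (c : ℝ) :
    MeasurableEmbedding (fun p : ℝ × ℝ => (p.1 + c * p.2, p.2)) :=
  (xShear c).toMeasurableEquiv.measurableEmbedding

lemma svStep_mp (τ : ℝ) (E0 E1 : ℝ → ℝ) (h0 : Continuous E0) (h1 : Continuous E1) :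
    MeasurePreserving (svStep τ E0 E1) volume volume := by
  rw [svStep_eq]
  exact (vShear_mp (fun x => (τ/2) * E0 x) (by fun_prop)).comp
    ((xShear_mp (-τ)).comp (vShear_mp (fun x => (τ/2) * E1 x) (by fun_prop)))

lemma svStep_emb (τ : ℝ) (E0 E1 : ℝ → ℝ) (h0 : Continuous E0) (h1 : Continuous E1) :
    MeasurableEmbedding (svStep τ E0 E1) := by
  rw [svStep_eq]
  exact (vShear_emb (fun x => (τ/2) * E0 x) (by fun_prop)).comp
    ((xShear_emb (-τ)).comp (vShear_emb (fun x => (τ/2) * E1 x) (by fun_prop)))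

lemma nufi_mp (τ : ℝ) (E0 E1 : ℕ → ℝ → ℝ) (N : ℕ)
    (hE0 : ∀ k, 1 ≤ k → k ≤ N → Continuous (E0 k))
    (hE1 : ∀ k, 1 ≤ k → k ≤ N → Continuous (E1 k)) :
    ∀ n ≤ N, MeasurePreserving (nufiComp τ E0 E1 n) volume volume ∧
      MeasurableEmbedding (nufiComp τ E0 E1 n) := by
  intro n hn
  induction n with
  | zero => exact ⟨MeasurePreserving.id volume, MeasurableEmbedding.id⟩
  | succ m ih =>
    have hm := ih (Nat.le_of_succ_le hn)
    have h0 := hE0 (m+1) (Nat.succ_le_succ (Nat.zero_le m)) hn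
    have h1 := hE1 (m+1) (Nat.succ_le_succ (Nat.zero_le m)) hn
    exact ⟨hm.1.comp (svStep_mp τ _ _ h0 h1), hm.2.comp (svStep_emb τ _ _ h0 h1)⟩

/-- Conservation of kinetic entropy by the NuFI discrete solution. -/
theorem nufi_entropy_conservation (τ : ℝ) (hτ : 0 < τ) (N : ℕ) (E0 E1 : ℕ → ℝ → ℝ)
    (hE0 : ∀ k, 1 ≤ k → k ≤ N → Continuous (E0 k))
    (hE1 : ∀ k, 1 ≤ k → k ≤ N → Continuous (E1 k))
    (f₀ : ℝ × ℝ → ℝ) (hf₀ : Measurable f₀)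
    (hint : Integrable (fun p : ℝ × ℝ => f₀ p * Real.log (f₀ p))
      (volume : Measure (ℝ × ℝ))) :
    ∫ p : ℝ × ℝ, f₀ (nufiComp τ E0 E1 N p) * Real.log (f₀ (nufiComp τ E0 E1 N p))
      = ∫ p : ℝ × ℝ, f₀ p * Real.log (f₀ p) := by
  obtain ⟨hmp, hemb⟩ := nufi_mp τ E0 E1 N hE0 hE1 N le_rfl
  exact hmp.integral_comp hemb (fun p => f₀ p * Real.log (f₀ p))
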